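/- Kleinman lower bound by the Riccati solution: Let A be a real q×q matrix, B a real q×m matrix, Q real symmetric positive definite, and R real symmetric positive definite. Suppose P* is a real symmetric positive definite solution of the algebraic Riccati equation Aᵀ P* + P* A + Q − P* B R⁻¹ Bᵀ P* = 0. Let K be any real m×q matrix with A − BK Hurwitz and let P be the symmetric solution of the Lyapunov equation (A − BK)ᵀ P + P (A − BK) + Q + Kᵀ R K = 0. Then P* ⪯ P, i.e., P − P* is positive semidefinite. -/

import Mathlib

/-!
Completing the square in the Riccati equation shows that `D = P - P*` satisfies the Lyapunov
equation `Fᵀ D + D F = -(K - R⁻¹ Bᵀ P*)ᵀ R (K - R⁻¹ Bᵀ P*) ⪯ 0` for the closed-loop matrix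
`F = A - B K`. For Hurwitz `F` such a Lyapunov inequality forces `D ⪰ 0`. Instead of integrating
along `exp (t F)` we pass to the Cayley transform `C = (1 + F)(1 - F)⁻¹`: its eigenvalues
`μ` satisfy `Re ((μ - 1)/(μ + 1)) < 0`, i.e. `|μ| < 1`, so `Cᵏ → 0` by Gelfand's formula, while
`D - Cᵀ D C ⪰ 0` telescopes to `D ⪰ (Cᵏ)ᵀ D Cᵏ → 0`.
-/

open Matrix

/-- Symmetric part of a real square matrix: `(A + Aᵀ)/2`. -/
noncomputable def symPart {n : ℕ} (A : Matrix (Fin n) (Fin n) ℝ) : Matrix (Fin n) (Fin n) ℝ :=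
  (1 / 2 : ℝ) • (A + Aᵀ)

theorem symPart_isHermitian {n : ℕ} (A : Matrix (Fin n) (Fin n) ℝ) :
    (symPart A).IsHermitian := by
  ext i j
  simp [symPart, Matrix.IsHermitian, Matrix.conjTranspose_apply, mul_comm, add_comm]
  ring

/-- Logarithmic 2-norm of a real square matrix: the largest eigenvalue of its
symmetric part `(A + Aᵀ)/2`. -/
noncomputable def mu2 {n : ℕ} (A : Matrix (Fin n) (Fin n) ℝ) : ℝ :=
  ⨆ i, (symPart_isHermitian A).eigenvalues i

/-- Spectral norm of a real matrix: the operator norm induced by the Euclidean norm. -/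
noncomputable def specNorm {m n : ℕ} (A : Matrix (Fin m) (Fin n) ℝ) : ℝ :=
  ‖LinearMap.toContinuousLinearMap (Matrix.toEuclideanLin A)‖

/-- A real square matrix is Hurwitz if every complex eigenvalue (i.e. every element of the
complex spectrum of its complexification) has strictly negative real part. -/
def IsHurwitz {n : ℕ} (A : Matrix (Fin n) (Fin n) ℝ) : Prop :=
  ∀ μ ∈ spectrum ℂ (A.map (Complex.ofReal ·)), μ.re < 0

open Filter Topology
open scoped ComplexOrder

theorem spectrum.sub_one_div_add_one_mem_of_mem_cayley {𝕜 A : Type*} [Field 𝕜] [NeZero (2 : 𝕜)]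
    [Ring A] [Algebra 𝕜 A] {a b : A} (hb : (1 - a) * b = 1) (hb' : b * (1 - a) = 1) {μ : 𝕜}
    (hμ : μ ∈ spectrum 𝕜 ((1 + a) * b)) :
    (μ - 1) / (μ + 1) ∈ spectrum 𝕜 a := by
  have key : algebraMap 𝕜 A μ - (1 + a) * b = ((μ - 1) • 1 - (μ + 1) • a) * b := by
    calc algebraMap 𝕜 A μ - (1 + a) * b = (μ • 1 * (1 - a) - (1 + a)) * b := by
          rw [sub_mul, mul_assoc, hb, mul_one, Algebra.algebraMap_eq_smul_one]
      _ = ((μ - 1) • 1 - (μ + 1) • a) * b := by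
          congr 1
          simp only [mul_sub, smul_mul_assoc, one_mul, mul_one, sub_smul, add_smul, one_smul]
          abel
  rw [spectrum.mem_iff, key, (Units.isUnit ⟨b, 1 - a, hb', hb⟩).mul_right_iff] at hμ
  have hμ1 : μ + 1 ≠ 0 := by
    intro h
    rw [h, zero_smul, sub_zero, show μ - 1 = -2 by linear_combination h] at hμ
    exact hμ (by
      simpa using (isUnit_smul_iff (Units.mk0 (-2 : 𝕜) (neg_ne_zero.2 two_ne_zero)) (1 : A)).2
        isUnit_one)
  refine fun h => hμ ?_
  rw [show (μ - 1) • (1 : A) - (μ + 1) • a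
      = (μ + 1) • (algebraMap 𝕜 A ((μ - 1) / (μ + 1)) - a) by
    rw [Algebra.algebraMap_eq_smul_one, smul_sub, smul_smul, mul_div_cancel₀ _ hμ1]]
  simpa using (isUnit_smul_iff (Units.mk0 _ hμ1) _).2 h

theorem Complex.norm_lt_one_of_re_sub_one_div_add_one_neg {μ : ℂ} (h : ((μ - 1) / (μ + 1)).re < 0) :
    ‖μ‖ < 1 := by
  have hre : ((μ - 1) / (μ + 1)).re = (normSq μ - 1) / normSq (μ + 1) := by
    rw [div_re, ← add_div]
    congr 1
    simp only [normSq_apply, sub_re, add_re, sub_im, add_im, one_re, one_im]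
    ring
  rw [hre, div_neg_iff] at h
  have hsq : normSq μ < 1 := by
    rcases h with ⟨-, h⟩ | ⟨h, -⟩
    · exact absurd h (normSq_nonneg _).not_gt
    · linarith
  rwa [← sq_lt_one_iff₀ (norm_nonneg μ), ← normSq_eq_norm_sq]

theorem tendsto_pow_atTop_nhds_zero_of_forall_norm_lt_one {A : Type*} [NormedRing A]
    [NormedAlgebra ℂ A] [CompleteSpace A] {a : A} (ha : ∀ μ ∈ spectrum ℂ a, ‖μ‖ < 1) :
    Tendsto (a ^ ·) atTop (𝓝 0) := by
  cases subsingleton_or_nontrivial A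
  · simp [Subsingleton.elim _ (0 : A)]
  have hρ : spectralRadius ℂ a < 1 := by
    simpa using spectrum.spectralRadius_lt_of_forall_lt (r := 1) a
      fun μ hμ => by exact_mod_cast ha μ hμ
  obtain ⟨r, hρr, hr1⟩ := ENNReal.lt_iff_exists_nnreal_btwn.mp hρ
  have hbound : ∀ᶠ k : ℕ in atTop, ‖a ^ k‖ ≤ (r : ℝ) ^ k := by
    have gelfand := spectrum.pow_nnnorm_pow_one_div_tendsto_nhds_spectralRadius a
    filter_upwards [gelfand.eventually_lt_const hρr, eventually_ne_atTop 0] with k hk hk0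
    have h := ENNReal.rpow_le_rpow hk.le (Nat.cast_nonneg k : (0 : ℝ) ≤ k)
    rw [← ENNReal.rpow_mul, one_div_mul_cancel (Nat.cast_ne_zero.2 hk0), ENNReal.rpow_one,
      ENNReal.rpow_natCast] at h
    exact_mod_cast h
  refine tendsto_zero_iff_norm_tendsto_zero.2 <|
    squeeze_zero' (.of_forall fun _ => norm_nonneg _) hbound ?_
  exact tendsto_pow_atTop_nhds_zero_of_lt_one r.coe_nonneg (by exact_mod_cast hr1)

namespace Matrix

theorem isClosed_setOf_posSemidef {n 𝕜 : Type*} [Fintype n] [RCLike 𝕜] :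
    IsClosed {M : Matrix n n 𝕜 | M.PosSemidef} := by
  have : {M : Matrix n n 𝕜 | M.PosSemidef} =
      {M | Mᴴ = M} ∩ ⋂ x : n → 𝕜, {M | 0 ≤ star x ⬝ᵥ M *ᵥ x} := by
    ext M
    simp only [Set.mem_ofPred_eq, Set.mem_inter_iff, Set.mem_iInter]
    exact ⟨fun h => ⟨h.isHermitian, h.dotProduct_mulVec_nonneg⟩,
      fun h => .of_dotProduct_mulVec_nonneg h.1 h.2⟩
  rw [this]
  refine (isClosed_eq continuous_id.matrix_conjTranspose continuous_id).inter <|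
    isClosed_iInter fun x => isClosed_le continuous_const ?_
  exact continuous_const.dotProduct (continuous_id.matrix_mulVec continuous_const)

theorem PosSemidef.of_tendsto_pow {n 𝕜 : Type*} [Fintype n] [DecidableEq n] [RCLike 𝕜]
    {C D : Matrix n n 𝕜} (hC : Tendsto (C ^ ·) atTop (𝓝 0)) (h : (D - Cᴴ * D * C).PosSemidef) :
    D.PosSemidef := by
  have hpow : ∀ k : ℕ, (D - (C ^ k)ᴴ * D * C ^ k).PosSemidef := by
    intro k
    induction k with
    | zero => simpa using PosSemidef.zero
    | succ k ih =>
      have : D - (C ^ (k + 1))ᴴ * D * C ^ (k + 1)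
          = (D - (C ^ k)ᴴ * D * C ^ k) + (C ^ k)ᴴ * (D - Cᴴ * D * C) * C ^ k := by
        rw [pow_succ', conjTranspose_mul]
        noncomm_ring
      rw [this]
      exact ih.add (h.conjTranspose_mul_mul_same _)
  have hlim : Tendsto (fun k : ℕ => D - (C ^ k)ᴴ * D * C ^ k) atTop (𝓝 D) := by
    have hcont : Continuous fun M : Matrix n n 𝕜 => D - Mᴴ * D * M :=
      continuous_const.sub
        ((continuous_id.matrix_conjTranspose.matrix_mul continuous_const).matrix_mul continuous_id)
    simpa only [Function.comp_def, conjTranspose_zero, zero_mul, mul_zero, sub_zero]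
      using (hcont.tendsto 0).comp hC
  exact isClosed_setOf_posSemidef.mem_of_tendsto hlim (.of_forall hpow)

theorem lyapunov_sub_riccati {n m α : Type*} [Fintype n] [Fintype m] [DecidableEq m]
    [CommRing α] (A Q P P' : Matrix n n α) (B : Matrix n m α) (R : Matrix m m α)
    (K : Matrix m n α) (hR : IsUnit R.det) (hRs : R.IsSymm) (hP' : P'.IsSymm) :
    (A - B * K)ᵀ * (P - P') + (P - P') * (A - B * K)
        + (K - R⁻¹ * Bᵀ * P')ᵀ * R * (K - R⁻¹ * Bᵀ * P')
      = ((A - B * K)ᵀ * P + P * (A - B * K) + Q + Kᵀ * R * K)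
        - (Aᵀ * P' + P' * A + Q - P' * B * R⁻¹ * Bᵀ * P') := by
  have hRinvs : R⁻¹ᵀ = R⁻¹ := by rw [transpose_nonsing_inv, hRs.eq]
  simp only [transpose_sub, transpose_mul, hRinvs, hP'.eq, transpose_transpose,
    Matrix.sub_mul, Matrix.mul_sub, Matrix.mul_assoc, mul_nonsing_inv_cancel_left (h := hR),
    nonsing_inv_mul_cancel_left (h := hR)]
  abel

end Matrix

namespace IsHurwitz

variable {n : ℕ} {F : Matrix (Fin n) (Fin n) ℝ}

theorem isUnit_one_sub (hF : IsHurwitz F) : IsUnit (1 - F) := by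
  have h1 : (1 : ℂ) ∉ spectrum ℂ (F.map (Complex.ofReal ·)) := fun h => by
    have := hF 1 h
    norm_num at this
  rw [spectrum.notMem_iff, map_one, isUnit_iff_isUnit_det,
    show 1 - F.map (Complex.ofReal ·) = Complex.ofRealHom.mapMatrix (1 - F) by
      rw [map_sub, map_one]; rfl,
    ← RingHom.map_det, isUnit_iff_ne_zero, Complex.ofRealHom_eq_coe, Complex.ofReal_ne_zero] at h1
  exact (isUnit_iff_isUnit_det _).2 (isUnit_iff_ne_zero.2 h1)

-- Any Banach-algebra norm on complex matrices serves for Gelfand's formula: all induce the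
-- entrywise topology in which the conclusion is stated.
attribute [local instance] Matrix.linftyOpNormedRing Matrix.linftyOpNormedAlgebra in
theorem tendsto_cayley_pow (hF : IsHurwitz F) :
    Tendsto (((1 + F) * (1 - F)⁻¹) ^ ·) atTop (𝓝 0) := by
  let φ := (Complex.ofRealHom.mapMatrix : Matrix (Fin n) (Fin n) ℝ →+* Matrix (Fin n) (Fin n) ℂ)
  have hS := (isUnit_iff_isUnit_det _).1 hF.isUnit_one_sub
  have hb : (1 - φ F) * φ (1 - F)⁻¹ = 1 := by
    rw [← map_one φ, ← map_sub, ← map_mul, mul_nonsing_inv _ hS, map_one]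
  have hb' : φ (1 - F)⁻¹ * (1 - φ F) = 1 := by
    rw [← map_one φ, ← map_sub, ← map_mul, nonsing_inv_mul _ hS, map_one]
  have hC : Tendsto (fun k : ℕ => φ (((1 + F) * (1 - F)⁻¹) ^ k)) atTop (𝓝 0) := by
    simp only [map_pow, map_mul, map_add, map_one]
    refine tendsto_pow_atTop_nhds_zero_of_forall_norm_lt_one fun μ hμ => ?_
    exact Complex.norm_lt_one_of_re_sub_one_div_add_one_neg
      (hF _ (spectrum.sub_one_div_add_one_mem_of_mem_cayley hb hb' hμ))
  have hre : Continuous fun M : Matrix (Fin n) (Fin n) ℂ => M.map Complex.re :=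
    continuous_id.matrix_map Complex.continuous_re
  simpa [Function.comp_def, φ] using (hre.tendsto 0).comp hC

theorem posSemidef_of_lyapunov (hF : IsHurwitz F) {D : Matrix (Fin n) (Fin n) ℝ}
    (h : (-(Fᵀ * D + D * F)).PosSemidef) : D.PosSemidef := by
  refine .of_tendsto_pow hF.tendsto_cayley_pow ?_
  set S := 1 - F
  have hS : S * S⁻¹ = 1 := mul_nonsing_inv _ ((isUnit_iff_isUnit_det _).1 hF.isUnit_one_sub)
  have key : D - ((1 + F) * S⁻¹)ᴴ * D * ((1 + F) * S⁻¹)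
      = (S⁻¹)ᴴ * (-(Fᵀ * D + D * F) + -(Fᵀ * D + D * F)) * S⁻¹ := by
    calc D - ((1 + F) * S⁻¹)ᴴ * D * ((1 + F) * S⁻¹)
        = (S⁻¹)ᴴ * (Sᴴ * D * S - (1 + F)ᴴ * D * (1 + F)) * S⁻¹ := by
          have hD : D = (S * S⁻¹)ᴴ * D * (S * S⁻¹) := by
            rw [hS, conjTranspose_one, one_mul, mul_one]
          nth_rewrite 1 [hD]
          simp only [conjTranspose_mul]
          noncomm_ring
      _ = _ := by
          simp only [S, conjTranspose_eq_transpose_of_trivial, transpose_sub,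
            transpose_add, transpose_one]
          noncomm_ring
  rw [key]
  exact (h.add h).conjTranspose_mul_mul_same _

end IsHurwitz

theorem kleinman_lower_bound_general {q m : ℕ}
    (A : Matrix (Fin q) (Fin q) ℝ) (B : Matrix (Fin q) (Fin m) ℝ)
    (Q Pstar P : Matrix (Fin q) (Fin q) ℝ) (R : Matrix (Fin m) (Fin m) ℝ)
    (K : Matrix (Fin m) (Fin q) ℝ)
    (hR : R.PosDef)
    (hPstar : Pstar.PosDef)
    (hARE : Aᵀ * Pstar + Pstar * A + Q - Pstar * B * R⁻¹ * Bᵀ * Pstar = 0)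
    (hK : IsHurwitz (A - B * K))
    (hLyap : (A - B * K)ᵀ * P + P * (A - B * K) + Q + Kᵀ * R * K = 0) :
    (P - Pstar).PosSemidef := by
  have hdiff := lyapunov_sub_riccati A Q P Pstar B R K hR.det_pos.ne'.isUnit
    (isHermitian_iff_isSymm.1 hR.isHermitian)
    (isHermitian_iff_isSymm.1 hPstar.isHermitian)
  rw [hLyap, hARE, sub_zero] at hdiff
  refine hK.posSemidef_of_lyapunov ?_
  rw [neg_eq_of_add_eq_zero_right hdiff]
  simpa using hR.posSemidef.conjTranspose_mul_mul_same (K - R⁻¹ * Bᵀ * Pstar)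

/-- Kleinman lower bound by the Riccati solution: if `P*` is a symmetric
positive definite solution of the ARE `AᵀP* + P*A + Q − P*BR⁻¹BᵀP* = 0` and `P` is the
symmetric solution of the Lyapunov equation for any stabilizing gain `K`, then `P* ⪯ P`. -/
theorem kleinman_lower_bound {q m : ℕ}
    (A : Matrix (Fin q) (Fin q) ℝ) (B : Matrix (Fin q) (Fin m) ℝ)
    (Q Pstar P : Matrix (Fin q) (Fin q) ℝ) (R : Matrix (Fin m) (Fin m) ℝ)
    (K : Matrix (Fin m) (Fin q) ℝ)
    (hQ : Q.PosDef) (hR : R.PosDef)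
    (hPstar : Pstar.PosDef)
    (hARE : Aᵀ * Pstar + Pstar * A + Q - Pstar * B * R⁻¹ * Bᵀ * Pstar = 0)
    (hK : IsHurwitz (A - B * K))
    (hPsym : P.IsHermitian)
    (hLyap : (A - B * K)ᵀ * P + P * (A - B * K) + Q + Kᵀ * R * K = 0) :
    (P - Pstar).PosSemidef :=
  kleinman_lower_bound_general A B Q Pstar P R K hR hPstar hARE hK hLyap
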